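/- Let Φ : C → D be a K-linear functor between Krull-Schmidt categories satisfying: Φ sends indecomposables to indecomposables with local induced endomorphism ring maps, and Φ reflects isomorphy of indecomposables. Then a morphism f in C is a split injection if and only if Φ(f) is a split injection. -/

import Mathlib

open CategoryTheory CategoryTheory.Limits

def IsKrullSchmidt (C : Type*) [Category C] [Preadditive C] [HasFiniteBiproducts C] : Prop :=
  ∀ X : C, ∃ (n : ℕ) (f : Fin n → C),
    Nonempty (X ≅ ⨁ f) ∧ ∀ j, IsLocalRing (End (f j))

/-!
Decompose `M = ⨁ Mᵢ` and `N = ⨁ Nⱼ` into objects with local endomorphism rings and induct on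
the number of summands of `M`. If `r` is a retraction of `Φ f`, then `𝟙 (Φ M₀)` is the sum over
`j` of the endomorphisms `Φ (ι₀ ≫ f ≫ πⱼ ≫ ιⱼ) ≫ r ≫ Φ π₀`, so by locality one of them is
invertible. Then `Φ (ι₀ ≫ f ≫ πⱼ)` is a split mono into an object with local endomorphism ring,
hence an isomorphism, and the hypotheses on `Φ` make `ι₀ ≫ f ≫ πⱼ : M₀ ⟶ Nⱼ` an isomorphism.
Gaussian elimination now brings `f` into the diagonal form `(ι₀ ≫ f ≫ πⱼ) ⊕ f'` with
`f' : ⨁_{i ≠ 0} Mᵢ ⟶ ⨁_{k ≠ j} Nₖ`, and `Φ f'` is again a split mono, so induction applies.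
-/

namespace CategoryTheory

lemma isSplitMono_of_isSplitMono_comp {C : Type*} [Category C] {X Y Z : C} (f : X ⟶ Y)
    (g : Y ⟶ Z) [IsSplitMono (f ≫ g)] : IsSplitMono f :=
  IsSplitMono.mk' ⟨g ≫ retraction (f ≫ g), by rw [← Category.assoc]; exact IsSplitMono.id _⟩

variable {C : Type*} [Category C] [Preadditive C]

def Iso.conjRingEquiv {X Y : C} (α : X ≅ Y) : End X ≃+* End Y :=
  { α.conj with
    map_add' := fun a b =>
      (congrArg (α.inv ≫ ·) (Preadditive.add_comp _ _ _ a b α.hom)).trans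
        (Preadditive.comp_add _ _ _ _ _ _) }

lemma isLocalRing_end_of_iso {X Y : C} (α : X ≅ Y) [IsLocalRing (End X)] :
    IsLocalRing (End Y) :=
  (α.symm.conjRingEquiv : End Y →+* End X).domain_isLocalRing

lemma not_isZero_of_isLocalRing_end {X : C} [IsLocalRing (End X)] : ¬ IsZero X := fun hX =>
  one_ne_zero (α := End X) (hX.eq_of_src _ _)

lemma isIso_of_isSplitMono_of_isLocalRing_end {P Q : C} (a : P ⟶ Q) [IsSplitMono a]
    [IsLocalRing (End Q)] (hP : ¬ IsZero P) : IsIso a := by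
  rcases IsLocalRing.isUnit_or_isUnit_of_add_one
    (add_sub_cancel (show End Q from retraction a ≫ a) 1) with h | h
  · have : Epi (retraction a ≫ a) := by
      rw [isUnit_iff_isIso] at h; infer_instance
    have : Epi a := epi_of_epi (retraction a) a
    exact isIso_of_epi_of_isSplitMono a
  · have : IsIso (𝟙 Q - retraction a ≫ a) := (isUnit_iff_isIso _).mp h
    refine absurd ((IsZero.iff_isSplitMono_eq_zero a).mpr ?_) hP
    rw [← cancel_mono (𝟙 Q - retraction a ≫ a)]
    simp

lemma exists_isSplitMono_comp_of_sum_eq_id {A B : C} [IsLocalRing (End A)] (f : A ⟶ B)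
    [IsSplitMono f] {J : Type*} (s : Finset J) {G : J → C} (p : ∀ j, B ⟶ G j)
    (i : ∀ j, G j ⟶ B) (h : ∑ j ∈ s, p j ≫ i j = 𝟙 B) : ∃ j ∈ s, IsSplitMono (f ≫ p j) := by
  let e : J → End A := fun j => f ≫ p j ≫ i j ≫ retraction f
  have hsum : ∑ j ∈ s, e j = 1 := by
    show ∑ j ∈ s, f ≫ p j ≫ i j ≫ retraction f = 𝟙 A
    calc ∑ j ∈ s, f ≫ p j ≫ i j ≫ retraction f
        = f ≫ (∑ j ∈ s, p j ≫ i j) ≫ retraction f := by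
          simp only [Preadditive.comp_sum, Preadditive.sum_comp, Category.assoc]
      _ = 𝟙 A := by simp [h]
  obtain ⟨j, hj, hu⟩ := IsLocalRing.exists_of_isUnit_sum (hsum ▸ isUnit_one)
  have : IsIso (f ≫ p j ≫ i j ≫ retraction f) := (isUnit_iff_isIso _).mp hu
  exact ⟨j, hj, IsSplitMono.mk' ⟨i j ≫ retraction f ≫ inv (f ≫ p j ≫ i j ≫ retraction f),
    by simpa only [Category.assoc] using IsIso.hom_inv_id (f ≫ p j ≫ i j ≫ retraction f)⟩⟩

lemma indecomposable_of_isLocalRing_end [HasBinaryBiproducts C] {X : C} [IsLocalRing (End X)] :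
    Indecomposable X := by
  refine ⟨not_isZero_of_isLocalRing_end, fun Y Z e => or_iff_not_imp_left.mpr fun hY => ?_⟩
  have : IsIso (biprod.inl ≫ e.inv) := isIso_of_isSplitMono_of_isLocalRing_end _ hY
  have : IsIso (biprod.inl : Y ⟶ Y ⊞ Z) := by
    simpa using (inferInstance : IsIso ((biprod.inl ≫ e.inv) ≫ e.hom))
  rw [IsZero.iff_id_eq_zero]
  calc 𝟙 Z = biprod.inr ≫ 𝟙 (Y ⊞ Z) ≫ biprod.snd := by simp
    _ = 0 := by rw [(biprod.isIso_inl_iff_id_eq_fst_comp_inl Y Z).mp this]; simp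

lemma isSplitMono_biprod_map [HasBinaryBiproducts C] {A B P Q : C} (u : A ⟶ P) (v : B ⟶ Q)
    [IsSplitMono u] [IsSplitMono v] : IsSplitMono (biprod.map u v) :=
  IsSplitMono.mk' ⟨biprod.map (retraction u) (retraction v), by ext <;> simp⟩

lemma isZero_biproduct_of_isEmpty [HasFiniteBiproducts C] {J : Type} [Fintype J] [IsEmpty J]
    (f : J → C) : IsZero (⨁ f) := by
  simp [IsZero.iff_id_eq_zero, ← biproduct.total]

@[simps]
noncomputable def biproduct.isoBiprodSuccAbove [HasFiniteBiproducts C] [HasBinaryBiproducts C]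
    {n : ℕ} (f : Fin (n + 1) → C) (i : Fin (n + 1)) :
    ⨁ f ≅ f i ⊞ ⨁ (fun k => f (i.succAbove k)) where
  hom := biprod.lift (biproduct.π f i) (biproduct.lift fun k => biproduct.π f (i.succAbove k))
  inv := biprod.desc (biproduct.ι f i) (biproduct.desc fun k => biproduct.ι f (i.succAbove k))
  hom_inv_id := by
    rw [biprod.lift_desc, biproduct.lift_desc, ← biproduct.total, Fin.sum_univ_succAbove _ i]
  inv_hom_id := by
    ext k l
    · simp
    · simp [biproduct.ι_π_ne _ (i.succAbove_ne k).symm]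
    · simp [biproduct.ι_π_ne _ (i.succAbove_ne k)]
    · simp [biproduct.ι_π, i.succAbove_right_inj]

lemma isLocalRing_end_of_indecomposable [HasFiniteBiproducts C] [HasBinaryBiproducts C]
    (hC : IsKrullSchmidt C) {X : C} (hX : Indecomposable X) : IsLocalRing (End X) := by
  obtain ⟨n, F, ⟨e⟩, hF⟩ := hC X
  cases n with
  | zero => exact absurd ((isZero_biproduct_of_isEmpty F).of_iso e) hX.1
  | succ n =>
    let e' := e ≪≫ biproduct.isoBiprodSuccAbove F 0
    rcases hX.2 _ _ e' with h | h
    · exact absurd h not_isZero_of_isLocalRing_end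
    · exact isLocalRing_end_of_iso (e' ≪≫ (isoBiprodZero h).symm).symm

section Functor

variable {D : Type*} [Category D] (Φ : C ⥤ D)

lemma isIso_of_isIso_map [HasBinaryBiproducts C]
    (hEnd : ∀ X : C, Indecomposable X → ∀ e : End X, IsIso (Φ.map e) → IsIso e)
    (hIso : ∀ X Y : C, Indecomposable X → Indecomposable Y →
      Nonempty (Φ.obj X ≅ Φ.obj Y) → Nonempty (X ≅ Y))
    {X Y : C} (hX : Indecomposable X) (hY : Indecomposable Y) (u : X ⟶ Y) [IsIso (Φ.map u)] :
    IsIso u := by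
  obtain ⟨ψ⟩ := hIso X Y hX hY ⟨asIso (Φ.map u)⟩
  have : IsIso (u ≫ ψ.inv) := hEnd X hX _ (by rw [Φ.map_comp]; infer_instance)
  exact IsIso.of_isIso_comp_right u ψ.inv

lemma isSplitMono_of_isSplitMono_map_biprod_map [HasBinaryBiproducts C] {A B P Q : C}
    (u : A ⟶ P) (v : B ⟶ Q) [IsSplitMono (Φ.map (biprod.map u v))] : IsSplitMono (Φ.map v) := by
  have : IsSplitMono (Φ.map v ≫ Φ.map (biprod.inr : Q ⟶ P ⊞ Q)) := by
    rw [← Φ.map_comp, ← biprod.inr_map u, Φ.map_comp]; infer_instance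
  exact isSplitMono_of_isSplitMono_comp _ (Φ.map (biprod.inr : Q ⟶ P ⊞ Q))

lemma isSplitMono_of_isIso_inl_comp_fst [HasBinaryBiproducts C] {A B P Q : C}
    (g : A ⊞ B ⟶ P ⊞ Q) [IsIso (biprod.inl ≫ g ≫ biprod.fst)] [IsSplitMono (Φ.map g)]
    (hBQ : ∀ v : B ⟶ Q, IsSplitMono (Φ.map v) → IsSplitMono v) : IsSplitMono g := by
  obtain ⟨L, R, v, hv⟩ := Biprod.gaussian g
  have : IsSplitMono (Φ.map (biprod.map (biprod.inl ≫ g ≫ biprod.fst) v)) := by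
    rw [← hv, Φ.map_comp, Φ.map_comp]; infer_instance
  have := hBQ v (isSplitMono_of_isSplitMono_map_biprod_map Φ (biprod.inl ≫ g ≫ biprod.fst) v)
  have := isSplitMono_biprod_map (biprod.inl ≫ g ≫ biprod.fst) v
  rw [show g = L.inv ≫ biprod.map (biprod.inl ≫ g ≫ biprod.fst) v ≫ R.inv by simp [← hv]]
  infer_instance

variable [Preadditive D] [Φ.Additive]

lemma exists_isIso_comp_π [HasFiniteBiproducts C]
    (hloc : ∀ X : C, IsLocalRing (End X) → IsLocalRing (End (Φ.obj X)))
    (hrefl : ∀ {X Y : C} (u : X ⟶ Y), IsLocalRing (End X) → IsLocalRing (End Y) →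
      IsIso (Φ.map u) → IsIso u)
    {A : C} [IsLocalRing (End A)] {J : Type} [Fintype J] (G : J → C)
    [∀ j, IsLocalRing (End (G j))] (f : A ⟶ ⨁ G) [IsSplitMono (Φ.map f)] :
    ∃ j, IsIso (f ≫ biproduct.π G j) := by
  have := hloc A ‹_›
  obtain ⟨j, -, hj⟩ := exists_isSplitMono_comp_of_sum_eq_id (Φ.map f) Finset.univ
    (fun j => Φ.map (biproduct.π G j)) (fun j => Φ.map (biproduct.ι G j))
    (by simp_rw [← Φ.map_comp, ← Φ.map_sum, biproduct.total, Φ.map_id])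
  have := hloc (G j) inferInstance
  rw [← Φ.map_comp] at hj
  exact ⟨j, hrefl _ ‹_› inferInstance
    (isIso_of_isSplitMono_of_isLocalRing_end _ not_isZero_of_isLocalRing_end)⟩

lemma isSplitMono_of_isSplitMono_map_of_biproduct [HasFiniteBiproducts C] [HasBinaryBiproducts C]
    (hloc : ∀ X : C, IsLocalRing (End X) → IsLocalRing (End (Φ.obj X)))
    (hrefl : ∀ {X Y : C} (u : X ⟶ Y), IsLocalRing (End X) → IsLocalRing (End Y) →
      IsIso (Φ.map u) → IsIso u) :
    ∀ {n m : ℕ} (F : Fin n → C) (G : Fin m → C) [∀ j, IsLocalRing (End (F j))]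
      [∀ j, IsLocalRing (End (G j))] (f : ⨁ F ⟶ ⨁ G), IsSplitMono (Φ.map f) → IsSplitMono f
  | 0, _, F, _, _, _, f, _ => IsSplitMono.mk' ⟨0, (isZero_biproduct_of_isEmpty F).eq_of_src _ _⟩
  | n + 1, m, F, G, _, _, f, _ => by
    let eF := biproduct.isoBiprodSuccAbove F 0
    let f' := eF.inv ≫ f
    have : IsSplitMono (Φ.map f') := by rw [Φ.map_comp]; infer_instance
    have : IsSplitMono (Φ.map (biprod.inl ≫ f')) := by rw [Φ.map_comp]; infer_instance
    obtain ⟨j, hj⟩ := exists_isIso_comp_π Φ hloc hrefl G (biprod.inl ≫ f')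
    obtain ⟨m, rfl⟩ : ∃ m', m = m' + 1 := ⟨m - 1, by have := j.pos; omega⟩
    let eG := biproduct.isoBiprodSuccAbove G j
    have : IsIso (biprod.inl ≫ (f' ≫ eG.hom) ≫ biprod.fst) := by
      simp only [eG, Category.assoc, biproduct.isoBiprodSuccAbove_hom, biprod.lift_fst] at hj ⊢
      exact hj
    have : IsSplitMono (Φ.map (f' ≫ eG.hom)) := by rw [Φ.map_comp]; infer_instance
    have : IsSplitMono (f' ≫ eG.hom) := isSplitMono_of_isIso_inl_comp_fst Φ _
      fun v hv => isSplitMono_of_isSplitMono_map_of_biproduct hloc hrefl _ _ v hv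
    rw [show f = eF.hom ≫ (f' ≫ eG.hom) ≫ eG.inv by
      simp only [f', Category.assoc, Iso.hom_inv_id, Category.comp_id, Iso.hom_inv_id_assoc]]
    infer_instance

end Functor

end CategoryTheory

theorem functor_reflects_split_mono_general
    {C : Type*} [Category C] [Preadditive C]
    [HasFiniteBiproducts C] [HasBinaryBiproducts C]
    {D : Type*} [Category D] [Preadditive D]
    [HasFiniteBiproducts D] [HasBinaryBiproducts D]
    (hC : IsKrullSchmidt C) (hD : IsKrullSchmidt D)
    (Φ : C ⥤ D) [Φ.Additive]
    (h1 : ∀ X : C, Indecomposable X → Indecomposable (Φ.obj X))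
    (h2 : ∀ X : C, Indecomposable X → ∀ e : End X, IsIso (Φ.map e) → IsIso e)
    (h3 : ∀ X Y : C, Indecomposable X → Indecomposable Y →
      (Nonempty (X ≅ Y) ↔ Nonempty (Φ.obj X ≅ Φ.obj Y)))
    {M N : C} (f : M ⟶ N) :
    IsSplitMono f ↔ IsSplitMono (Φ.map f) := by
  refine ⟨fun _ => inferInstance, fun _ => ?_⟩
  have hloc (X : C) (_ : IsLocalRing (End X)) : IsLocalRing (End (Φ.obj X)) :=
    isLocalRing_end_of_indecomposable hD (h1 X indecomposable_of_isLocalRing_end)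
  have hrefl {X Y : C} (u : X ⟶ Y) (_ : IsLocalRing (End X)) (_ : IsLocalRing (End Y))
      (_ : IsIso (Φ.map u)) : IsIso u :=
    isIso_of_isIso_map Φ h2 (fun X Y hX hY => (h3 X Y hX hY).mpr)
      indecomposable_of_isLocalRing_end indecomposable_of_isLocalRing_end u
  obtain ⟨n, F, ⟨eM⟩, _⟩ := hC M
  obtain ⟨m, G, ⟨eN⟩, _⟩ := hC N
  have : IsSplitMono (eM.inv ≫ f ≫ eN.hom) :=
    isSplitMono_of_isSplitMono_map_of_biproduct Φ hloc hrefl F G _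
      (by simp only [Φ.map_comp]; infer_instance)
  rw [show f = eM.hom ≫ (eM.inv ≫ f ≫ eN.hom) ≫ eN.inv by simp]
  infer_instance

/-- Let `Φ : C ⥤ D` be a `K`-linear functor between Krull–Schmidt
categories such that (i) `Φ` sends indecomposables to indecomposables and the induced map
`End(X) → End(Φ X)` is a local ring homomorphism for every indecomposable `X` (i.e.
`Φ.map e` invertible implies `e` invertible), and (ii) for indecomposable `X, Y`, `X ≅ Y`
iff `Φ X ≅ Φ Y`.  Then `f : M ⟶ N` is a split injection iff `Φ.map f` is. -/
theorem functor_reflects_split_mono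
    {K : Type*} [Field K]
    {C : Type*} [Category C] [Preadditive C] [Linear K C]
    [HasFiniteBiproducts C] [HasBinaryBiproducts C]
    {D : Type*} [Category D] [Preadditive D] [Linear K D]
    [HasFiniteBiproducts D] [HasBinaryBiproducts D]
    (hC : IsKrullSchmidt C) (hD : IsKrullSchmidt D)
    (Φ : C ⥤ D) [Φ.Additive] [Φ.Linear K]
    (h1 : ∀ X : C, Indecomposable X → Indecomposable (Φ.obj X))
    (h2 : ∀ X : C, Indecomposable X → ∀ e : End X, IsIso (Φ.map e) → IsIso e)
    (h3 : ∀ X Y : C, Indecomposable X → Indecomposable Y →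
      (Nonempty (X ≅ Y) ↔ Nonempty (Φ.obj X ≅ Φ.obj Y)))
    {M N : C} (f : M ⟶ N) :
    IsSplitMono f ↔ IsSplitMono (Φ.map f) :=
  functor_reflects_split_mono_general hC hD Φ h1 h2 h3 f
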